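/- The problem of intensional equivalence between propositional recursive programs is at least as hard as graph isomorphism: there is a polynomial-time computable map E ↦ prog(E) from finite directed graphs to irreducible propositional programs such that two graphs E, F on n nodes are isomorphic if and only if prog(E) and prog(F) are globally intensionally equivalent, if and only if prog(E) and prog(F) are congruent. -/

import Mathlib

/-!
`prog(E)` is irreducible, so no reduction step applies to it and its canonical forms are the
programs congruent to it. A relabelling `σ` of the nodes induces the renaming
`p_i ↦ p_{σ i}`, `p_{ij} ↦ p_{σ i σ j}`, `r ↦ r`, which is a congruence `prog(E) ≡ prog(F)`
when `σ` is an isomorphism; congruent programs have equal recursors in every structure.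

Conversely, evaluate the parts in an environment given by a partial valuation of the
propositional variables. The meaning of a part `false`, `p` or `if a then b else c` (`b ≠ c`)
determines it: only `false` is defined under the empty valuation, `p` resp. `a` is the only
variable the part is strict in, and the branches are read off by fixing the value of `a`.
So equality of intensions is a syntactic matching of the parts along a bijection `ν` of the
variables. The part `r = false` forces `ν r = r`, the parts `p_i = p_i` force
`ν p_i = p_{τ i}` for a permutation `τ`, and then `E_{ij}` is matched with `F_{τ i τ j}`;
the position of `r` in it gives `E(i,j) = F(τ i, τ j)`.
-/

namespace McCarthy

/-- Sorts: individual (`ind`) and Boolean (`bool`). -/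
inductive Srt where
  | ind | bool
deriving DecidableEq

/-- A function variable is identified by its sort, arity and index. -/
abbrev FV : Type := Srt × ℕ × ℕ

/-- Explicit terms over a vocabulary `Φ`. -/
inductive Term (Φ : Type) where
  | tt : Term Φ
  | ff : Term Φ
  | ivar : ℕ → Term Φ
  | fapp : FV → List (Term Φ) → Term Φ
  | prim : Φ → List (Term Φ) → Term Φ
  | cond : Srt → Term Φ → Term Φ → Term Φ → Term Φ

variable {Φ : Type}

def isIvar : Term Φ → Bool
  | .ivar _ => true
  | _ => false

/-- Immediate terms: individual variables, or function variables applied to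
individual variables (nullary function variables included). -/
def isImmediate : Term Φ → Bool
  | .ivar _ => true
  | .fapp p args => (args.all isIvar) && (args.length == p.2.1)
  | _ => false

/-- Irreducible terms: immediate terms, Boolean constants, or applications
with immediate arguments. -/
def isIrreducible : Term Φ → Bool
  | .tt => true
  | .ff => true
  | .ivar _ => true
  | .fapp p args => ((args.all isIvar) && (args.length == p.2.1)) || args.all isImmediate
  | .prim _ args => args.all isImmediate
  | .cond _ a b c => isImmediate a && isImmediate b && isImmediate c

/-- The sort of an immediate (or irreducible non-`prim`) term. -/
def immSort : Term Φ → Srt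
  | .tt => .bool
  | .ff => .bool
  | .fapp p _ => p.1
  | .cond s _ _ _ => s
  | _ => .ind

mutual
/-- `sizeT E` counts the occurrences of non-immediate proper subterms of `E`. -/
def sizeT : Term Φ → ℕ
  | .tt => 0
  | .ff => 0
  | .ivar _ => 0
  | .fapp _ args => sizeTL args
  | .prim _ args => sizeTL args
  | .cond _ a b c =>
      (sizeT a + (if isImmediate a then 0 else 1)) +
      (sizeT b + (if isImmediate b then 0 else 1)) +
      (sizeT c + (if isImmediate c then 0 else 1))

def sizeTL : List (Term Φ) → ℕ
  | [] => 0
  | t :: ts => (sizeT t + (if isImmediate t then 0 else 1)) + sizeTL ts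
end

mutual
/-- Renaming of function variables. -/
def renameF (ρ : FV → FV) : Term Φ → Term Φ
  | .tt => .tt
  | .ff => .ff
  | .ivar i => .ivar i
  | .fapp p args => .fapp (ρ p) (renameFL ρ args)
  | .prim f args => .prim f (renameFL ρ args)
  | .cond s a b c => .cond s (renameF ρ a) (renameF ρ b) (renameF ρ c)

def renameFL (ρ : FV → FV) : List (Term Φ) → List (Term Φ)
  | [] => []
  | t :: ts => renameF ρ t :: renameFL ρ ts
end

mutual
/-- Renaming of individual variables. -/
def renameV (σ : ℕ → ℕ) : Term Φ → Term Φ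
  | .tt => .tt
  | .ff => .ff
  | .ivar i => .ivar (σ i)
  | .fapp p args => .fapp p (renameVL σ args)
  | .prim f args => .prim f (renameVL σ args)
  | .cond s a b c => .cond s (renameV σ a) (renameV σ b) (renameV σ c)

def renameVL (σ : ℕ → ℕ) : List (Term Φ) → List (Term Φ)
  | [] => []
  | t :: ts => renameV σ t :: renameVL σ ts
end

mutual
/-- Does the function variable `q` occur in the term? -/
def occursF (q : FV) : Term Φ → Bool
  | .tt => false
  | .ff => false
  | .ivar _ => false
  | .fapp p args => (decide (p = q)) || occursFL q args
  | .prim _ args => occursFL q args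
  | .cond _ a b c => occursF q a || occursF q b || occursF q c

def occursFL (q : FV) : List (Term Φ) → Bool
  | [] => false
  | t :: ts => occursF q t || occursFL q ts
end


/-! ## Extended recursive programs -/

/-- A body equation `p(x⃗) = rhs`. -/
structure Eqn (Φ : Type) where
  p : FV
  xs : List ℕ
  rhs : Term Φ

/-- An extended recursive program `E₀(x⃗) where { p₁(x⃗₁) = E₁, …, p_K(x⃗_K) = E_K }`,
with the body represented as a multiset (set representation of the paper). -/
structure ExtProg (Φ : Type) where
  fvars : List ℕ
  head : Term Φ
  body : Multiset (Eqn Φ)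

/-- The function variables bound by the body of a program. -/
def bodyPvars (E : ExtProg Φ) : Multiset FV := E.body.map Eqn.p

/-- `q` is fresh for `E`: it is not a recursion variable of `E` and occurs nowhere in `E`. -/
def FreshIn (q : FV) (E : ExtProg Φ) : Prop :=
  occursF q E.head = false ∧ ∀ e ∈ E.body, e.p ≠ q ∧ occursF q e.rhs = false

/-- The argument list of an application term (the empty list otherwise). -/
def argsOf : Term Φ → List (Term Φ)
  | .fapp _ as => as
  | .prim _ as => as
  | .cond _ a b c => [a, b, c]
  | _ => []

/-- Replace the argument list of an application term. -/
def withArgs : Term Φ → List (Term Φ) → Term Φ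
  | .fapp p _, as => .fapp p as
  | .prim f _, as => .prim f as
  | .cond s _ _ _, [a, b, c] => .cond s a b c
  | t, _ => t

def isApp : Term Φ → Bool
  | .fapp _ _ => true
  | .prim _ _ => true
  | .cond _ _ _ _ => true
  | _ => false

/-- Labels `(p, j, q)` of arrow reductions. -/
abbrev Lbl : Type := FV × ℕ × FV

/-- The arrow-reduction relation `E(x⃗) →^{(p,j,q)} F(x⃗)` on extended programs:
either a non-immediate `j`-th argument of the (outermost application) right-hand side
of the body equation for `p` is split off into a new equation for the fresh variable `q`
(body case), or — when `p` is fresh, serving merely as a marker — the non-immediate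
`j`-th argument of the head is split off (head case). -/
inductive Step : Lbl → ExtProg Φ → ExtProg Φ → Prop where
  | body (p : FV) (j : ℕ) (q : FV) (E F : ExtProg Φ) (s : Multiset (Eqn Φ)) (e : Eqn Φ)
      (G : Term Φ)
      (hbody : E.body = s + {e}) (hp : e.p = p) (happ : isApp e.rhs = true)
      (hG : (argsOf e.rhs)[j]? = some G) (himm : isImmediate G = false)
      (hq : FreshIn q E) (har : q.2.1 = e.xs.length)
      (hF : F = ⟨E.fvars, E.head,
        s + {⟨p, e.xs, withArgs e.rhs ((argsOf e.rhs).set j (.fapp q (e.xs.map Term.ivar)))⟩,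
             ⟨q, e.xs, G⟩}⟩) :
      Step (p, j, q) E F
  | head (p : FV) (j : ℕ) (q : FV) (E F : ExtProg Φ) (G : Term Φ)
      (hp : FreshIn p E) (hq : FreshIn q E) (hpq : p ≠ q) (happ : isApp E.head = true)
      (hG : (argsOf E.head)[j]? = some G) (himm : isImmediate G = false)
      (har : q.2.1 = E.fvars.length)
      (hF : F = ⟨E.fvars,
        withArgs E.head ((argsOf E.head).set j (.fapp q (E.fvars.map Term.ivar))),
        E.body + {⟨q, E.fvars, G⟩}⟩) :
      Step (p, j, q) E F

/-- One-step reduction: arrow reduction for some label. -/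
def Step1 (E F : ExtProg Φ) : Prop := ∃ l : Lbl, Step l E F

/-- The `~_E` relation on function variables used in the Amalgamation Lemma:
`p ~_E p'` iff both are the same recursion variable of `E` (body case) or
neither is a recursion variable of `E` (head case). -/
def SameCase (E : ExtProg Φ) (p p' : FV) : Prop :=
  (p = p' ∧ p ∈ bodyPvars E) ∨ (p ∉ bodyPvars E ∧ p' ∉ bodyPvars E)

/-- Size of an extended program: total number of occurrences of non-immediate
proper subterms of its parts. -/
def sizeP (E : ExtProg Φ) : ℕ := sizeT E.head + (E.body.map (fun e => sizeT e.rhs)).sum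

/-- An extended program is irreducible if all its parts are irreducible terms. -/
def IrrProg (E : ExtProg Φ) : Prop :=
  isIrreducible E.head = true ∧ ∀ e ∈ E.body, isIrreducible e.rhs = true

/-! ## Congruence -/

/-- `ρ` preserves sorts and arities of function variables. -/
def SortArityPres (ρ : FV → FV) : Prop := ∀ v : FV, (ρ v).1 = v.1 ∧ (ρ v).2.1 = v.2.1

/-- One equation is obtained from another by renaming the (bound) individual
variables and applying a renaming `ρ` of the function variables. -/
def EqnCong (ρ : FV → FV) (e f : Eqn Φ) : Prop :=
  f.p = ρ e.p ∧ ∃ σ : ℕ → ℕ,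
    (∀ a ∈ e.xs, ∀ b ∈ e.xs, σ a = σ b → a = b) ∧
    f.xs = e.xs.map σ ∧ f.rhs = renameV σ (renameF ρ e.rhs)

/-- Congruence of extended programs: an alphabetic change of the bound individual
and function variables together with a permutation of the body equations
(the latter being automatic in the multiset representation). -/
def Congruent (E F : ExtProg Φ) : Prop :=
  ∃ ρ : FV → FV, Function.Bijective ρ ∧ SortArityPres ρ ∧
    (∀ p : FV, p ∉ bodyPvars E → ρ p = p) ∧
    F.fvars = E.fvars ∧ F.head = renameF ρ E.head ∧
    Multiset.Rel (EqnCong ρ) E.body F.body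

/-- Full reduction: a (possibly empty) chain of one-step reductions followed by a
congruence, i.e. `E ≡_c F` or `E →₁ ⋯ →₁ F' ≡_c F`. -/
def Reduces (E F : ExtProg Φ) : Prop :=
  ∃ G : ExtProg Φ, Relation.ReflTransGen Step1 E G ∧ Congruent G F


/-! ## Semantics -/

section Semantics

variable {A : Type}

/-- An environment for the function variables: a partial function
`Aⁿ ⇀ A ⊕ Bool` for each function variable (`none` = divergence). -/
abbrev Env (A : Type) : Type := FV → List A → Option (A ⊕ Bool)

/-- A `Φ`-structure on the universe `A`: a partial interpretation of each
primitive (`Sum.inl` for sort `ind`, `Sum.inr` for sort `bool`). -/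
abbrev Struc (Φ A : Type) : Type := Φ → List A → Option (A ⊕ Bool)

/-- An environment is sort- and arity-respecting. -/
def GoodEnv (env : Env A) : Prop :=
  ∀ p : FV, ∀ as v, env p as = some v →
    as.length = p.2.1 ∧ (p.1 = Srt.ind → ∃ a, v = Sum.inl a) ∧
    (p.1 = Srt.bool → ∃ b, v = Sum.inr b)

/-- A structure is sort- and arity-respecting. -/
def GoodStruc (St : Struc Φ A) (arΦ : Φ → ℕ) (sΦ : Φ → Srt) : Prop :=
  ∀ φ as v, St φ as = some v →
    as.length = arΦ φ ∧ (sΦ φ = Srt.ind → ∃ a, v = Sum.inl a) ∧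
    (sΦ φ = Srt.bool → ∃ b, v = Sum.inr b)

/-- A structure is total (on arguments of the right arity). -/
def TotalStruc (St : Struc Φ A) (arΦ : Φ → ℕ) : Prop :=
  ∀ φ as, as.length = arΦ φ → (St φ as).isSome

mutual
/-- Kleene evaluation of terms: `none` means divergence; arguments of
applications are evaluated strictly and must be of sort `ind`; the conditional
evaluates its test first and then the selected branch. -/
def eval (St : Struc Φ A) (iv : ℕ → A) (env : Env A) : Term Φ → Option (A ⊕ Bool)
  | .tt => some (Sum.inr true)
  | .ff => some (Sum.inr false)
  | .ivar i => some (Sum.inl (iv i))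
  | .fapp p args =>
      match evalArgs St iv env args with
      | none => none
      | some as => env p as
  | .prim f args =>
      match evalArgs St iv env args with
      | none => none
      | some as => St f as
  | .cond _ a b c =>
      match eval St iv env a with
      | some (Sum.inr true) => eval St iv env b
      | some (Sum.inr false) => eval St iv env c
      | _ => none

def evalArgs (St : Struc Φ A) (iv : ℕ → A) (env : Env A) :
    List (Term Φ) → Option (List A)
  | [] => some []
  | t :: ts =>
      match eval St iv env t with
      | some (Sum.inl a) =>
          match evalArgs St iv env ts with
          | some as => some (a :: as)
          | none => none
      | _ => none
end

/-- Validity of the identity `E = F` in the structure: Kleene strong equality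
under every assignment of individuals to the individual variables and of
sort-respecting partial functions to the function variables. -/
def Valid (St : Struc Φ A) (E F : Term Φ) : Prop :=
  ∀ (iv : ℕ → A) (env : Env A), GoodEnv env → eval St iv env E = eval St iv env F

/-- An individual variable is *placed* in the identity
`φ(zs₁) = ψ(zs₂)` if it is one of the listed immediate arguments. -/
def Placed (zs₁ zs₂ : List (Term Φ)) (s : ℕ) : Prop := Term.ivar s ∈ zs₁ ++ zs₂

/-- Injective validity `A ⊨_inj φ(zs₁) = ψ(zs₂)`: validity under all
assignments which are injective on the placed individual variables. -/
def ValidInjId (St : Struc Φ A) (φ ψ : Φ) (zs₁ zs₂ : List (Term Φ)) : Prop :=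
  ∀ (iv : ℕ → A) (env : Env A), GoodEnv env →
    (∀ s t, Placed zs₁ zs₂ s → Placed zs₁ zs₂ t → iv s = iv t → s = t) →
    eval St iv env (.prim φ zs₁) = eval St iv env (.prim ψ zs₂)

/-- Bind the variables `xs` to the values `as` on top of the assignment `iv`. -/
def bindList (xs : List ℕ) (as : List A) (iv : ℕ → A) (i : ℕ) : A :=
  match xs.findIdx? (· = i) with
  | some k => as.getD k (iv i)
  | none => iv i

/-- `env` solves the system of recursive equations in the body of `E`. -/
def Solves (St : Struc Φ A) (iv : ℕ → A) (E : ExtProg Φ) (env : Env A) : Prop :=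
  ∀ e ∈ E.body, ∀ as : List A, as.length = e.xs.length →
    env e.p as = eval St (bindList e.xs as iv) env e.rhs

/-- The pointwise partial-function (information) ordering on environments. -/
def envLE (env env' : Env A) : Prop :=
  ∀ p as, env p as = none ∨ env p as = env' p as

/-- `Den St iv E w` : the denotation of the extended program `E` at the
assignment `iv` is `w`, computed by evaluating the head at the least solution
of the body. -/
def Den (St : Struc Φ A) (iv : ℕ → A) (E : ExtProg Φ) (w : Option (A ⊕ Bool)) : Prop :=
  ∃ env : Env A, Solves St iv E env ∧ (∀ env', Solves St iv E env' → envLE env env') ∧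
    eval St iv env E.head = w

/-! ## Recursors and intensions -/

/-- The renaming of individual variables matching the list `xs` with the list `ys`. -/
def bindRen (xs ys : List ℕ) (i : ℕ) : ℕ :=
  match xs.findIdx? (· = i) with
  | some k => ys.getD k i
  | none => i

/-- The parts of two irreducible programs define the same functional, modulo the
renaming `ρ` of the recursion variables and the matching of the bound individual
variables. -/
def EqnSemEq (St : Struc Φ A) (ρ : FV → FV) (e f : Eqn Φ) : Prop :=
  e.p = ρ f.p ∧ e.xs.length = f.xs.length ∧
  ∀ (iv : ℕ → A) (env : Env A), GoodEnv env →
    eval St iv env e.rhs = eval St iv env (renameV (bindRen f.xs e.xs) (renameF ρ f.rhs))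

/-- The recursors of `E` and `F` on the structure are equal (strongly
isomorphic): the bodies match up to a sort- and arity-preserving bijection of the
recursion variables, with the corresponding parts denoting the same functionals. -/
def RecEq (St : Struc Φ A) (E F : ExtProg Φ) : Prop :=
  ∃ ρ : FV → FV, Function.Bijective ρ ∧ SortArityPres ρ ∧
    (∀ (iv : ℕ → A) (env : Env A), GoodEnv env →
      eval St iv env E.head = eval St iv env (renameF ρ F.head)) ∧
    Multiset.Rel (EqnSemEq St ρ) E.body F.body

/-- Intensional equivalence on a structure: the referential intensions (the
recursors of the canonical forms) of the two programs are equal. -/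
def IntEqOn (St : Struc Φ A) (E F : ExtProg Φ) : Prop :=
  ∃ E' F' : ExtProg Φ, Reduces E E' ∧ IrrProg E' ∧ Reduces F F' ∧ IrrProg F' ∧
    RecEq St E' F'

end Semantics

/-- Global intensional equivalence: equal referential intensions in every
infinite `Φ`-structure. -/
def GlobalIntEq (E F : ExtProg Φ) : Prop :=
  ∀ (A : Type) (St : Struc Φ A), Infinite A → IntEqOn St E F

/-- A program is proper if none of its parts is an immediate term of Boolean sort. -/
def ProperProg (E : ExtProg Φ) : Prop :=
  ¬(isImmediate E.head = true ∧ immSort E.head = Srt.bool) ∧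
  ∀ e ∈ E.body, ¬(isImmediate e.rhs = true ∧ immSort e.rhs = Srt.bool)


/-! ## Pure algebraic terms (Statement 0) -/

/-- Pure algebraic terms: built only from individual variables and function
variables of sort `ind` (of the correct arities) by application. -/
inductive PureAlg : Term Φ → Prop where
  | ivar (i : ℕ) : PureAlg (.ivar i)
  | fapp (n i : ℕ) (args : List (Term Φ)) (hargs : ∀ t ∈ args, PureAlg t)
      (hlen : args.length = n) : PureAlg (.fapp (Srt.ind, n, i) args)

/-! ## Bare identities (Statements 14, 16) -/

/-- A term is an individual variable or a nullary function variable of sort `ind`. -/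
def BareVarT (t : Term Φ) : Prop :=
  (∃ i, t = Term.ivar i) ∨ (∃ i, t = Term.fapp (Srt.ind, 0, i) [])

/-- A bare variable: `(false, i)` codes the individual variable `v_i`,
`(true, i)` codes the nullary function variable `p^{ind,0}_i`. -/
abbrev BareVar : Type := Bool × ℕ

/-- Canonical choice of bare variables: each variable occurring for the first
time is the first unused variable of its kind in the fixed alternating list
`v₀, p₀, v₁, p₁, …`. -/
def CanonicalBare (xs : List BareVar) : Prop :=
  ∀ i x, xs[i]? = some x → (∀ j < i, xs[j]? ≠ some x) →
    x.2 = (((xs.take i).filter (fun y => y.1 == x.1)).dedup).length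

/-- The representative function of an equivalence relation `r` on the placed
variables: a placed variable is sent to the least element of its class. -/
noncomputable def repFun (placed : ℕ → Prop) (r : ℕ → ℕ → Prop) (s : ℕ) : ℕ :=
  open Classical in
  if placed s then sInf {j | r s j} else s

/-! ## Propositional programs coding graphs (Statement 19) -/

/-- The propositional variable `r`. -/
def rVar : FV := (Srt.bool, 0, 0)

/-- The propositional variable `p_i`. -/
def pVar (n : ℕ) (i : Fin n) : FV := (Srt.bool, 0, 1 + (i : ℕ))

/-- The propositional variable `p_{ij}`. -/
def pijVar (n : ℕ) (i j : Fin n) : FV := (Srt.bool, 0, 1 + n + ((i : ℕ) * n + (j : ℕ)))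

/-- The part `E_{ij}` of the program coding the graph `E`. -/
def edgeTerm (n : ℕ) (E : Fin n → Fin n → Bool) (i j : Fin n) : Term Empty :=
  if E i j then
    .cond Srt.bool (.fapp (pVar n i) []) (.fapp (pVar n j) []) (.fapp rVar [])
  else
    .cond Srt.bool (.fapp (pVar n i) []) (.fapp rVar []) (.fapp (pVar n j) [])

/-- The irreducible propositional program `prog(E)` coding the graph `E`:
`true where { p_i = p_i : i < n } ∪ { p_{ij} = E_{ij} : i,j < n } ∪ { r = false }`. -/
def graphProg (n : ℕ) (E : Fin n → Fin n → Bool) : ExtProg Empty where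
  fvars := []
  head := .tt
  body :=
    (Finset.univ.val.map (fun i : Fin n => (⟨pVar n i, [], .fapp (pVar n i) []⟩ : Eqn Empty)))
    + ((Finset.univ.val (α := Fin n × Fin n)).map
        (fun ij => (⟨pijVar n ij.1 ij.2, [], edgeTerm n E ij.1 ij.2⟩ : Eqn Empty)))
    + {⟨rVar, [], .ff⟩}

open Function

section PropositionalTerms

def IsPropVar (v : FV) : Prop := v.1 = Srt.bool ∧ v.2.1 = 0

abbrev propVar (v : FV) : Term Φ := .fapp v []

abbrev propCond (a b c : FV) : Term Φ := .cond Srt.bool (propVar a) (propVar b) (propVar c)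

inductive IsPropTerm : Term Φ → Prop
  | tt : IsPropTerm .tt
  | ff : IsPropTerm .ff
  | var {v : FV} (hv : IsPropVar v) : IsPropTerm (propVar v)
  | cond {a b c : Term Φ} :
      IsPropTerm a → IsPropTerm b → IsPropTerm c → IsPropTerm (.cond Srt.bool a b c)

def PropProg (P : ExtProg Φ) : Prop := IsPropTerm P.head ∧ ∀ e ∈ P.body, IsPropTerm e.rhs

theorem SortArityPres.isPropVar {ρ : FV → FV} (hρ : SortArityPres ρ) {v : FV}
    (hv : IsPropVar v) : IsPropVar (ρ v) :=
  ⟨(hρ v).1.trans hv.1, (hρ v).2.trans hv.2⟩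

theorem SortArityPres.symm {κ : FV ≃ FV} (hκ : SortArityPres κ) : SortArityPres κ.symm := by
  intro v
  obtain ⟨hs, ha⟩ := hκ (κ.symm v)
  rw [κ.apply_symm_apply] at hs ha
  exact ⟨hs.symm, ha.symm⟩

namespace IsPropTerm

variable {t : Term Φ}

theorem renameV_eq (ht : IsPropTerm t) (σ : ℕ → ℕ) : renameV σ t = t := by
  induction ht with
  | var => simp [renameV, renameVL]
  | cond _ _ _ iha ihb ihc => simp [renameV, iha, ihb, ihc]
  | _ => simp [renameV]

theorem renameF_id (ht : IsPropTerm t) : renameF id t = t := by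
  induction ht with
  | var => simp [renameF, renameFL]
  | cond _ _ _ iha ihb ihc => simp [renameF, iha, ihb, ihc]
  | _ => simp [renameF]

theorem renameF_renameF (ht : IsPropTerm t) (ρ ρ' : FV → FV) :
    renameF ρ (renameF ρ' t) = renameF (ρ ∘ ρ') t := by
  induction ht with
  | var => simp [renameF, renameFL]
  | cond _ _ _ iha ihb ihc => simp [renameF, iha, ihb, ihc]
  | _ => simp [renameF]

theorem rename (ht : IsPropTerm t) {ρ : FV → FV} (hρ : SortArityPres ρ) :
    IsPropTerm (renameF ρ t) := by
  induction ht with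
  | tt => exact .tt
  | ff => exact .ff
  | var hv => simpa [renameF, renameFL] using var (hρ.isPropVar hv)
  | cond _ _ _ iha ihb ihc => exact cond iha ihb ihc

end IsPropTerm

end PropositionalTerms

section Valuations

/-- Kleene evaluation of a propositional term under a partial valuation `γ` of the
propositional variables. -/
def pval (γ : FV → Option Bool) : Term Φ → Option Bool
  | .tt => some true
  | .ff => some false
  | .fapp v [] => γ v
  | .cond _ a b c =>
      match pval γ a with
      | some true => pval γ b
      | some false => pval γ c
      | none => none
  | _ => none

variable {A : Type}

def envOf (γ : FV → Option Bool) : Env A := fun p as =>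
  if p.1 = Srt.bool ∧ p.2.1 = 0 ∧ as = [] then (γ p).map Sum.inr else none

theorem goodEnv_envOf (γ : FV → Option Bool) : GoodEnv (envOf (A := A) γ) := by
  intro p as v h
  unfold envOf at h
  split_ifs at h with hp
  obtain ⟨hs, ha, rfl⟩ := hp
  obtain ⟨b, -, rfl⟩ := Option.map_eq_some_iff.1 h
  exact ⟨ha.symm, fun h' => absurd (hs.symm.trans h') (by decide), fun _ => ⟨b, rfl⟩⟩

theorem eval_envOf (St : Struc Φ A) (iv : ℕ → A) (γ : FV → Option Bool) {t : Term Φ}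
    (ht : IsPropTerm t) : eval St iv (envOf γ) t = (pval γ t).map Sum.inr := by
  induction ht with
  | tt => simp [eval, pval]
  | ff => simp [eval, pval]
  | var hv => simp [eval, evalArgs, pval, envOf, hv.1, hv.2]
  | @cond a b c _ _ _ iha ihb ihc =>
      simp only [eval, pval, iha]
      rcases pval γ a with _ | _ | _ <;> simp [ihb, ihc]

end Valuations

section GraphRhs

def StrictIn (t : Term Φ) (x : FV) : Prop :=
  ∀ γ : FV → Option Bool, (pval γ t).isSome → (γ x).isSome

theorem strictIn_propVar_iff {v x : FV} : StrictIn (propVar v : Term Φ) x ↔ x = v := by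
  refine ⟨fun h => ?_, fun h γ => by simp [pval, h]⟩
  by_contra hx
  simpa [pval, hx] using h (fun y => if y = v then some true else none)

theorem strictIn_propCond_iff {a b c x : FV} (hbc : b ≠ c) :
    StrictIn (propCond a b c : Term Φ) x ↔ x = a := by
  refine ⟨fun h => ?_, ?_⟩
  · by_contra hxa
    by_cases hxb : x = b
    · subst hxb
      have := h (fun y => if y = a then some false else if y = c then some true else none)
      by_cases hca : c = a <;> simp_all [pval]
    · have := h (fun y => if y = a ∨ y = b then some true else none)
      simp_all [pval]
  · rintro rfl γ
    simp only [pval]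
    rcases γ x with _ | _ | _ <;> simp

theorem eq_of_forall_eq_of_eq_some {a b b' : FV} {t : Bool}
    (h : ∀ γ : FV → Option Bool, γ a = some t → γ b = γ b') : b = b' := by
  by_contra hbb
  have := h (fun y => if y = a then some t else if y = b then some !t else none)
  by_cases hba : b = a <;> by_cases hba' : b' = a <;> cases t <;> simp_all

@[simp]
theorem pval_propVar (γ : FV → Option Bool) (v : FV) :
    pval γ (propVar v : Term Φ) = γ v := rfl

theorem pval_propCond_of_eq_some {a b c : FV} {γ : FV → Option Bool} {t : Bool}
    (h : γ a = some t) : pval γ (propCond a b c : Term Φ) = if t then γ b else γ c := by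
  cases t <;> simp [pval, h]

theorem not_forall_pval_propVar_eq_propCond {v a b c : FV} (hbc : b ≠ c) :
    ¬ ∀ γ, pval γ (propVar v : Term Φ) = pval γ (propCond a b c : Term Φ) := by
  intro h
  have hva : v = a := (strictIn_propCond_iff hbc).1 fun γ hγ =>
    (strictIn_propVar_iff (Φ := Φ)).2 rfl γ (by rwa [h])
  subst hva
  have hb : v = b := eq_of_forall_eq_of_eq_some (a := v) (t := true) fun γ hγ => by
    simpa [pval_propCond_of_eq_some hγ] using h γ
  have hc : v = c := eq_of_forall_eq_of_eq_some (a := v) (t := false) fun γ hγ => by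
    simpa [pval_propCond_of_eq_some hγ] using h γ
  exact hbc (hb.symm.trans hc)

theorem propCond_eq_of_forall_pval_eq {a b c a' b' c' : FV} (hbc : b ≠ c) (hbc' : b' ≠ c')
    (h : ∀ γ, pval γ (propCond a b c : Term Φ) = pval γ (propCond a' b' c' : Term Φ)) :
    a = a' ∧ b = b' ∧ c = c' := by
  have ha : a = a' := ((strictIn_propCond_iff hbc).1 fun γ hγ =>
    (strictIn_propCond_iff (Φ := Φ) hbc').2 rfl γ (by rwa [← h])).symm
  subst ha
  refine ⟨rfl, ?_, ?_⟩
  · exact eq_of_forall_eq_of_eq_some (a := a) (t := true) fun γ hγ => by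
      simpa [pval_propCond_of_eq_some hγ] using h γ
  · exact eq_of_forall_eq_of_eq_some (a := a) (t := false) fun γ hγ => by
      simpa [pval_propCond_of_eq_some hγ] using h γ

/-- The shapes of the parts of `graphProg n E`. -/
inductive IsGraphRhs : Term Φ → Prop
  | ff : IsGraphRhs .ff
  | var {v : FV} (hv : IsPropVar v) : IsGraphRhs (propVar v)
  | cond {a b c : FV} (ha : IsPropVar a) (hb : IsPropVar b) (hc : IsPropVar c) (hbc : b ≠ c) :
      IsGraphRhs (propCond a b c)

namespace IsGraphRhs

variable {t u : Term Φ}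

theorem isPropTerm (ht : IsGraphRhs t) : IsPropTerm t := by
  cases ht with
  | ff => exact .ff
  | var hv => exact .var hv
  | cond ha hb hc => exact .cond (.var ha) (.var hb) (.var hc)

theorem isIrreducible (ht : IsGraphRhs t) : isIrreducible t = true := by
  cases ht with
  | ff => rfl
  | var hv => simp [McCarthy.isIrreducible, hv.2]
  | cond ha hb hc => simp [McCarthy.isIrreducible, isImmediate, ha.2, hb.2, hc.2]

theorem rename (ht : IsGraphRhs t) {ρ : FV → FV} (hρ : Injective ρ) (hρ' : SortArityPres ρ) :
    IsGraphRhs (renameF ρ t) := by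
  cases ht with
  | ff => simpa [renameF] using ff
  | var hv => simpa [renameF, renameFL] using var (hρ'.isPropVar hv)
  | cond ha hb hc hbc =>
      simpa [renameF, renameFL] using
        cond (hρ'.isPropVar ha) (hρ'.isPropVar hb) (hρ'.isPropVar hc) (hρ.ne hbc)

theorem eq_of_forall_pval_eq (ht : IsGraphRhs t) (hu : IsGraphRhs u)
    (h : ∀ γ, pval γ t = pval γ u) : t = u := by
  have h0 := h fun _ => none
  cases ht with
  | ff => cases hu <;> simp_all [pval]
  | @var v _ =>
      cases hu with
      | ff => simp [pval] at h0
      | @var w _ =>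
          have hwv : w = v := (strictIn_propVar_iff (Φ := Φ)).1 fun γ hγ =>
            (strictIn_propVar_iff (Φ := Φ)).2 rfl γ (by rwa [← h])
          rw [hwv]
      | cond _ _ _ hbc => exact absurd h (not_forall_pval_propVar_eq_propCond hbc)
  | cond _ _ _ hbc =>
      cases hu with
      | ff => simp [pval] at h0
      | var => exact absurd (fun γ => (h γ).symm) (not_forall_pval_propVar_eq_propCond hbc)
      | cond _ _ _ hbc' =>
          obtain ⟨rfl, rfl, rfl⟩ := propCond_eq_of_forall_pval_eq hbc hbc' h
          rfl

end IsGraphRhs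

end GraphRhs

section Programs

theorem isImmediate_of_isIvar {G : Term Φ} (h : isIvar G = true) : isImmediate G = true := by
  cases G <;> simp_all [isIvar, isImmediate]

theorem isImmediate_of_mem_argsOf {t G : Term Φ} (ht : isIrreducible t = true)
    (hG : G ∈ argsOf t) : isImmediate G = true := by
  cases t with
  | fapp p as =>
      simp only [isIrreducible, Bool.or_eq_true, Bool.and_eq_true, List.all_eq_true] at ht
      rcases ht with ⟨hiv, -⟩ | him
      · exact isImmediate_of_isIvar (hiv G hG)
      · exact him G hG
  | prim f as =>
      simp only [isIrreducible, List.all_eq_true] at ht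
      exact ht G hG
  | cond s a b c =>
      simp only [isIrreducible, Bool.and_eq_true] at ht
      simp only [argsOf, List.mem_cons, List.not_mem_nil, or_false] at hG
      rcases hG with rfl | rfl | rfl <;> tauto
  | _ => simp [argsOf] at hG

variable {P Q : ExtProg Φ}

theorem IrrProg.not_step (hP : IrrProg P) {l : Lbl} : ¬ Step l P Q := by
  intro h
  cases h with
  | body _ _ _ _ _ _ e _ hbody _ _ hG himm =>
      have he : e ∈ P.body := by
        rw [hbody]
        exact Multiset.mem_add.2 (Or.inr (Multiset.mem_singleton_self e))
      simp [isImmediate_of_mem_argsOf (hP.2 e he) (List.mem_of_getElem? hG)] at himm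
  | head _ _ _ _ _ _ _ _ _ _ hG himm =>
      simp [isImmediate_of_mem_argsOf hP.1 (List.mem_of_getElem? hG)] at himm

theorem Reduces.congruent_of_irrProg (h : Reduces P Q) (hP : IrrProg P) : Congruent P Q := by
  obtain ⟨G, hPG, hGQ⟩ := h
  rcases Relation.ReflTransGen.cases_head hPG with rfl | ⟨_, ⟨_, hstep⟩, _⟩
  · exact hGQ
  · exact absurd hstep hP.not_step

def EqnRenaming (ν : FV → FV) (e f : Eqn Φ) : Prop := f.p = ν e.p ∧ f.rhs = renameF ν e.rhs

theorem EqnCong.eqnRenaming {ρ : FV → FV} (hρ : SortArityPres ρ) {e f : Eqn Φ}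
    (h : EqnCong ρ e f) (he : IsPropTerm e.rhs) : EqnRenaming ρ e f := by
  obtain ⟨hp, _, -, -, hrhs⟩ := h
  exact ⟨hp, by rw [hrhs, (he.rename hρ).renameV_eq]⟩

theorem EqnRenaming.eqnCong {ρ : FV → FV} (hρ : SortArityPres ρ) {e f : Eqn Φ}
    (h : EqnRenaming ρ e f) (hxs : f.xs = e.xs) (he : IsPropTerm e.rhs) : EqnCong ρ e f :=
  ⟨h.1, id, fun _ _ _ _ h => h, by simp [hxs], by rw [h.2, (he.rename hρ).renameV_eq]⟩

theorem PropProg.congruent_refl (hP : PropProg P) : Congruent P P := by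
  refine ⟨id, bijective_id, fun _ => ⟨rfl, rfl⟩, fun _ _ => rfl, rfl, hP.1.renameF_id.symm, ?_⟩
  refine Multiset.rel_refl_of_refl_on fun e he => ⟨rfl, id, fun _ _ _ _ h => h, ?_, ?_⟩
  · simp
  · rw [(hP.2 e he).renameF_id, (hP.2 e he).renameV_eq]

theorem Congruent.recEq {A : Type} (St : Struc Φ A) (hP : PropProg P) (h : Congruent P Q) :
    RecEq St P Q := by
  obtain ⟨ρ, hbij, hρ, -, -, hhead, hbody⟩ := h
  set κ := Equiv.ofBijective ρ hbij
  have hκ : SortArityPres κ := hρ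
  have hinv {t : Term Φ} (ht : IsPropTerm t) : renameF κ.symm (renameF ρ t) = t := by
    rw [ht.renameF_renameF, show ⇑κ.symm ∘ ρ = id from funext κ.symm_apply_apply, ht.renameF_id]
  refine ⟨κ.symm, κ.symm.bijective, hκ.symm, fun _ _ _ => by rw [hhead, hinv hP.1], ?_⟩
  refine Multiset.Rel.mono hbody fun e he f _ hef => ?_
  obtain ⟨hp, _, -, hxs, hrhs⟩ := hef
  refine ⟨by rw [hp]; exact (κ.symm_apply_apply e.p).symm, by simp [hxs], fun _ _ _ => ?_⟩
  rw [hrhs, ((hP.2 e he).rename hρ).renameV_eq, hinv (hP.2 e he), (hP.2 e he).renameV_eq]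

theorem Congruent.globalIntEq (h : Congruent P Q) (hP : PropProg P) (hP' : IrrProg P)
    (hQ : PropProg Q) (hQ' : IrrProg Q) : GlobalIntEq P Q := fun _ St _ =>
  ⟨P, Q, ⟨P, .refl, hP.congruent_refl⟩, hP', ⟨Q, .refl, hQ.congruent_refl⟩, hQ', h.recEq St hP⟩

theorem EqnSemEq.pval_eq {A : Type} [Nonempty A] {St : Struc Φ A} {ρ : FV → FV}
    (hρ : SortArityPres ρ) {e f : Eqn Φ} (h : EqnSemEq St ρ e f) (he : IsPropTerm e.rhs)
    (hf : IsPropTerm f.rhs) (γ : FV → Option Bool) :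
    pval γ e.rhs = pval γ (renameF ρ f.rhs) := by
  have := h.2.2 (fun _ => Classical.arbitrary A) (envOf γ) (goodEnv_envOf γ)
  rw [(hf.rename hρ).renameV_eq, eval_envOf _ _ _ he, eval_envOf _ _ _ (hf.rename hρ)] at this
  exact Option.map_injective Sum.inr_injective this

theorem IntEqOn.exists_eqnRenaming {A : Type} [Nonempty A] {St : Struc Φ A}
    (h : IntEqOn St P Q) (hP : IrrProg P) (hQ : IrrProg Q)
    (hPg : ∀ e ∈ P.body, IsGraphRhs e.rhs) (hQg : ∀ f ∈ Q.body, IsGraphRhs f.rhs) :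
    ∃ ν : FV → FV, Injective ν ∧ ∀ e ∈ P.body, ∃ f ∈ Q.body, EqnRenaming ν e f := by
  obtain ⟨P', Q', hPP', -, hQQ', -, ρ, hρb, hρ, -, hrel⟩ := h
  obtain ⟨ρ₁, hρ₁b, hρ₁, -, -, -, hrel₁⟩ := hPP'.congruent_of_irrProg hP
  obtain ⟨ρ₂, hρ₂b, hρ₂, -, -, -, hrel₂⟩ := hQQ'.congruent_of_irrProg hQ
  set κ := Equiv.ofBijective (ρ ∘ ρ₂) (hρb.comp hρ₂b)
  refine ⟨κ.symm ∘ ρ₁, κ.symm.injective.comp hρ₁b.1, fun e he => ?_⟩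
  obtain ⟨e', he', hee'⟩ := Multiset.exists_mem_of_rel_of_mem hrel₁ he
  obtain ⟨f', hf', he'f'⟩ := Multiset.exists_mem_of_rel_of_mem hrel he'
  obtain ⟨f, hf, hff'⟩ := Multiset.exists_mem_of_rel_of_mem (Multiset.rel_flip.2 hrel₂) hf'
  have hee' := hee'.eqnRenaming hρ₁ (hPg e he).isPropTerm
  have hff' := EqnCong.eqnRenaming hρ₂ hff' (hQg f hf).isPropTerm
  have hpval := he'f'.pval_eq hρ (by rw [hee'.2]; exact (hPg e he).isPropTerm.rename hρ₁)
    (by rw [hff'.2]; exact (hQg f hf).isPropTerm.rename hρ₂)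
  rw [hee'.2, hff'.2] at hpval
  have hrhs := ((hPg e he).rename hρ₁b.1 hρ₁).eq_of_forall_pval_eq
    (((hQg f hf).rename hρ₂b.1 hρ₂).rename hρb.1 hρ) hpval
  rw [(hQg f hf).isPropTerm.renameF_renameF] at hrhs
  refine ⟨f, hf, κ.eq_symm_apply.2 ?_, ?_⟩
  · rw [← hee'.1, he'f'.1, hff'.1]
    rfl
  · have hκ : ⇑κ.symm ∘ (ρ ∘ ρ₂) = id := funext κ.symm_apply_apply
    rw [← (hPg e he).isPropTerm.renameF_renameF, hrhs, (hQg f hf).isPropTerm.renameF_renameF, hκ,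
      (hQg f hf).isPropTerm.renameF_id]

end Programs

theorem rel_map_univ_val_of_equiv {α β γ : Type*} [Fintype α] {r : β → γ → Prop} {f : α → β}
    {g : α → γ} (σ : α ≃ α) (h : ∀ a, r (f a) (g (σ a))) :
    Multiset.Rel r (Finset.univ.val.map f) (Finset.univ.val.map g) := by
  conv_rhs => rw [← Multiset.map_univ_val_equiv σ, Multiset.map_map]
  exact Multiset.rel_map.2 (Multiset.rel_refl_of_refl_on fun a _ => h a)

section GraphPrograms

variable {n : ℕ}

theorem isPropVar_rVar : IsPropVar rVar := ⟨rfl, rfl⟩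

theorem isPropVar_pVar (i : Fin n) : IsPropVar (pVar n i) := ⟨rfl, rfl⟩

theorem pVar_injective : Injective (pVar n) := fun i j h => by
  simpa [pVar, Fin.ext_iff] using h

theorem pijVar_injective {i j k l : Fin n} (h : pijVar n i j = pijVar n k l) : i = k ∧ j = l := by
  have hval : (finProdFinEquiv (i, j)).val = (finProdFinEquiv (k, l)).val := by
    simp only [pijVar, Prod.mk.injEq, true_and] at h
    simp only [finProdFinEquiv_apply_val]
    linarith
  simpa using finProdFinEquiv.injective (Fin.ext hval)

theorem pVar_ne_rVar (i : Fin n) : pVar n i ≠ rVar := by simp [pVar, rVar]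

theorem pijVar_ne_rVar (i j : Fin n) : pijVar n i j ≠ rVar := by simp [pijVar, rVar]

theorem pVar_ne_pijVar (i j k : Fin n) : pVar n i ≠ pijVar n j k := by
  simp only [pVar, pijVar, ne_eq, Prod.mk.injEq, true_and]
  omega

theorem edgeTerm_eq (E : Fin n → Fin n → Bool) (i j : Fin n) :
    edgeTerm n E i j = propCond (pVar n i) (if E i j then pVar n j else rVar)
      (if E i j then rVar else pVar n j) := by
  unfold edgeTerm
  split <;> simp_all

theorem isGraphRhs_edgeTerm (E : Fin n → Fin n → Bool) (i j : Fin n) :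
    IsGraphRhs (edgeTerm n E i j) := by
  rw [edgeTerm_eq]
  split
  · exact .cond (isPropVar_pVar i) (isPropVar_pVar j) isPropVar_rVar (pVar_ne_rVar j)
  · exact .cond (isPropVar_pVar i) isPropVar_rVar (isPropVar_pVar j) (pVar_ne_rVar j).symm

theorem edgeTerm_inj {E F : Fin n → Fin n → Bool} {i j k l : Fin n}
    (h : edgeTerm n E i j = edgeTerm n F k l) : i = k ∧ j = l ∧ E i j = F k l := by
  rw [edgeTerm_eq, edgeTerm_eq] at h
  cases hE : E i j <;> cases hF : F k l <;>
    simp [hE, hF, pVar, rVar, Fin.ext_iff] at h ⊢ <;> omega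

theorem renameF_edgeTerm {ν : FV → FV} {τ : Fin n → Fin n}
    (hp : ∀ i, ν (pVar n i) = pVar n (τ i)) (hr : ν rVar = rVar)
    {E F : Fin n → Fin n → Bool} {i j : Fin n} (h : F (τ i) (τ j) = E i j) :
    renameF ν (edgeTerm n E i j) = edgeTerm n F (τ i) (τ j) := by
  rw [edgeTerm_eq, edgeTerm_eq, h]
  split <;> simp [renameF, renameFL, hp, hr]

theorem mem_graphProg_body {E : Fin n → Fin n → Bool} {e : Eqn Empty} :
    e ∈ (graphProg n E).body ↔
      (∃ i, e = ⟨pVar n i, [], propVar (pVar n i)⟩) ∨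
      (∃ i j, e = ⟨pijVar n i j, [], edgeTerm n E i j⟩) ∨
      e = ⟨rVar, [], .ff⟩ := by
  simp only [graphProg, Multiset.mem_add, Multiset.mem_map, Multiset.mem_singleton,
    Finset.mem_val, Finset.mem_univ, true_and, Prod.exists, or_assoc]
  simp only [eq_comm]

theorem isGraphRhs_of_mem_graphProg_body {E : Fin n → Fin n → Bool} {e : Eqn Empty}
    (he : e ∈ (graphProg n E).body) : IsGraphRhs e.rhs := by
  rcases mem_graphProg_body.1 he with ⟨i, rfl⟩ | ⟨i, j, rfl⟩ | rfl
  · exact .var (isPropVar_pVar i)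
  · exact isGraphRhs_edgeTerm E i j
  · exact .ff

theorem propProg_graphProg (E : Fin n → Fin n → Bool) : PropProg (graphProg n E) :=
  ⟨.tt, fun _ he => (isGraphRhs_of_mem_graphProg_body he).isPropTerm⟩

theorem irrProg_graphProg (E : Fin n → Fin n → Bool) : IrrProg (graphProg n E) :=
  ⟨rfl, fun _ he => (isGraphRhs_of_mem_graphProg_body he).isIrreducible⟩

end GraphPrograms

section GraphIsomorphism

variable {n : ℕ} {E F : Fin n → Fin n → Bool}

theorem exists_iso_of_eqnRenaming {ν : FV → FV} (hν : Injective ν)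
    (h : ∀ e ∈ (graphProg n E).body, ∃ f ∈ (graphProg n F).body, EqnRenaming ν e f) :
    ∃ σ : Equiv.Perm (Fin n), ∀ i j, E i j = F (σ i) (σ j) := by
  have hr : ν rVar = rVar := by
    obtain ⟨f, hf, hp, hrhs⟩ := h _ (mem_graphProg_body.2 (Or.inr (Or.inr rfl)))
    rcases mem_graphProg_body.1 hf with ⟨k, rfl⟩ | ⟨k, l, rfl⟩ | rfl
    · simp [renameF] at hrhs
    · simp [renameF, edgeTerm_eq] at hrhs
    · exact hp.symm
  have hp (i : Fin n) : ∃ k, ν (pVar n i) = pVar n k := by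
    obtain ⟨f, hf, -, hrhs⟩ := h _ (mem_graphProg_body.2 (Or.inl ⟨i, rfl⟩))
    rcases mem_graphProg_body.1 hf with ⟨k, rfl⟩ | ⟨k, l, rfl⟩ | rfl
    · exact ⟨k, by simpa [renameF, renameFL] using hrhs.symm⟩
    · simp [renameF, renameFL, edgeTerm_eq] at hrhs
    · simp [renameF, renameFL] at hrhs
  choose τ hτ using hp
  have hτ_bij : Bijective τ := Finite.injective_iff_bijective.1 fun i j hij =>
    pVar_injective (hν (by rw [hτ, hτ, hij]))
  set σ := Equiv.ofBijective τ hτ_bij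
  refine ⟨σ, fun i j => ?_⟩
  obtain ⟨f, hf, -, hrhs⟩ := h _ (mem_graphProg_body.2 (Or.inr (Or.inl ⟨i, j, rfl⟩)))
  rw [renameF_edgeTerm hτ hr (F := fun a b => E (σ.symm a) (σ.symm b))
    (by simp only [σ, Equiv.ofBijective_symm_apply_apply])] at hrhs
  rcases mem_graphProg_body.1 hf with ⟨k, rfl⟩ | ⟨k, l, rfl⟩ | rfl
  · simp [edgeTerm_eq] at hrhs
  · obtain ⟨rfl, rfl, hFE⟩ := edgeTerm_inj hrhs
    simpa [σ] using hFE.symm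
  · simp [edgeTerm_eq] at hrhs

def graphVar (n : ℕ) : Fin n ⊕ (Fin n × Fin n) ⊕ Unit → FV
  | .inl i => pVar n i
  | .inr (.inl ij) => pijVar n ij.1 ij.2
  | .inr (.inr _) => rVar

theorem graphVar_injective : Injective (graphVar n) := by
  rintro (i | ⟨i, j⟩ | ⟨⟩) (k | ⟨k, l⟩ | ⟨⟩) h <;>
    simp only [graphVar] at h
  · rw [pVar_injective h]
  · exact absurd h (pVar_ne_pijVar i k l)
  · exact absurd h (pVar_ne_rVar i)
  · exact absurd h.symm (pVar_ne_pijVar k i j)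
  · obtain ⟨rfl, rfl⟩ := pijVar_injective h
    rfl
  · exact absurd h (pijVar_ne_rVar i j)
  · exact absurd h.symm (pVar_ne_rVar k)
  · exact absurd h.symm (pijVar_ne_rVar k l)
  · rfl

theorem graphVar_mem_bodyPvars (x : Fin n ⊕ (Fin n × Fin n) ⊕ Unit) :
    graphVar n x ∈ bodyPvars (graphProg n E) := by
  refine Multiset.mem_map.2 ?_
  rcases x with i | ⟨i, j⟩ | ⟨⟩
  · exact ⟨_, mem_graphProg_body.2 (Or.inl ⟨i, rfl⟩), rfl⟩
  · exact ⟨_, mem_graphProg_body.2 (Or.inr (Or.inl ⟨i, j, rfl⟩)), rfl⟩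
  · exact ⟨_, mem_graphProg_body.2 (Or.inr (Or.inr rfl)), rfl⟩

noncomputable def relabel (σ : Equiv.Perm (Fin n)) : Equiv.Perm FV :=
  Equiv.Perm.viaEmbedding (Equiv.sumCongr σ (Equiv.sumCongr (σ.prodCongr σ) (Equiv.refl Unit)))
    ⟨graphVar n, graphVar_injective⟩

theorem relabel_pVar (σ : Equiv.Perm (Fin n)) (i : Fin n) :
    relabel σ (pVar n i) = pVar n (σ i) :=
  Equiv.Perm.viaEmbedding_apply _ _ (Sum.inl i)

theorem relabel_pijVar (σ : Equiv.Perm (Fin n)) (i j : Fin n) :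
    relabel σ (pijVar n i j) = pijVar n (σ i) (σ j) :=
  Equiv.Perm.viaEmbedding_apply _ _ (Sum.inr (Sum.inl (i, j)))

theorem relabel_rVar (σ : Equiv.Perm (Fin n)) : relabel σ rVar = rVar :=
  Equiv.Perm.viaEmbedding_apply _ _ (Sum.inr (Sum.inr ()))

theorem relabel_of_notMem_range (σ : Equiv.Perm (Fin n)) {v : FV}
    (hv : v ∉ Set.range (graphVar n)) : relabel σ v = v :=
  Equiv.Perm.viaEmbedding_apply_of_notMem _ _ v hv

theorem sortArityPres_relabel (σ : Equiv.Perm (Fin n)) : SortArityPres (relabel σ) := by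
  intro v
  by_cases hv : v ∈ Set.range (graphVar n)
  · obtain ⟨x, rfl⟩ := hv
    rcases x with i | ⟨i, j⟩ | ⟨⟩
    · rw [graphVar, relabel_pVar]
      exact ⟨rfl, rfl⟩
    · rw [graphVar, relabel_pijVar]
      exact ⟨rfl, rfl⟩
    · rw [graphVar, relabel_rVar]
      exact ⟨rfl, rfl⟩
  · simp [relabel_of_notMem_range σ hv]

theorem congruent_graphProg_of_iso (σ : Equiv.Perm (Fin n))
    (hσ : ∀ i j, E i j = F (σ i) (σ j)) : Congruent (graphProg n E) (graphProg n F) := by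
  have hρ := sortArityPres_relabel σ
  refine ⟨relabel σ, (relabel σ).bijective, hρ, fun v hv => relabel_of_notMem_range σ ?_, rfl,
    by simp [graphProg, renameF], ?_⟩
  · rintro ⟨x, rfl⟩
    exact hv (graphVar_mem_bodyPvars x)
  refine Multiset.Rel.add (Multiset.Rel.add ?_ ?_) (Multiset.rel_cons_left.2 ⟨_, 0, ?_, .zero, rfl⟩)
  · refine rel_map_univ_val_of_equiv σ fun i =>
      EqnRenaming.eqnCong hρ ?_ rfl (.var (isPropVar_pVar i))
    exact ⟨(relabel_pVar σ i).symm, by simp [renameF, renameFL, relabel_pVar]⟩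
  · refine rel_map_univ_val_of_equiv (σ.prodCongr σ) fun ij =>
      EqnRenaming.eqnCong hρ ?_ rfl (isGraphRhs_edgeTerm E ij.1 ij.2).isPropTerm
    exact ⟨(relabel_pijVar σ _ _).symm,
      (renameF_edgeTerm (relabel_pVar σ) (relabel_rVar σ) (hσ _ _).symm).symm⟩
  · exact EqnRenaming.eqnCong hρ ⟨(relabel_rVar σ).symm, by simp [renameF]⟩ rfl .ff

end GraphIsomorphism

theorem GlobalIntEq.exists_iso_graphProg {n : ℕ} {E F : Fin n → Fin n → Bool}
    (h : GlobalIntEq (graphProg n E) (graphProg n F)) :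
    ∃ σ : Equiv.Perm (Fin n), ∀ i j, E i j = F (σ i) (σ j) := by
  obtain ⟨ν, hν, hren⟩ := (h ℕ isEmptyElim inferInstance).exists_eqnRenaming
    (irrProg_graphProg E) (irrProg_graphProg F)
    (fun _ => isGraphRhs_of_mem_graphProg_body) (fun _ => isGraphRhs_of_mem_graphProg_body)
  exact exists_iso_of_eqnRenaming hν hren

/-- Intensional equivalence of propositional programs is at least
as hard as graph isomorphism: for the (explicit, polynomial-time computable)
coding `E ↦ prog(E)` of finite graphs by irreducible propositional programs, two
graphs on `n` nodes are isomorphic iff their codes are globally intensionally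
equivalent, iff their codes are congruent. -/
theorem statement19 (n : ℕ) (E F : Fin n → Fin n → Bool) :
    ((∃ σ : Equiv.Perm (Fin n), ∀ i j, E i j = F (σ i) (σ j)) ↔
      GlobalIntEq (graphProg n E) (graphProg n F)) ∧
    (GlobalIntEq (graphProg n E) (graphProg n F) ↔
      Congruent (graphProg n E) (graphProg n F)) := by
  have iso_congruent : (∃ σ : Equiv.Perm (Fin n), ∀ i j, E i j = F (σ i) (σ j)) →
      Congruent (graphProg n E) (graphProg n F) := fun ⟨σ, hσ⟩ => congruent_graphProg_of_iso σ hσ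
  have congruent_globalIntEq (h : Congruent (graphProg n E) (graphProg n F)) :
      GlobalIntEq (graphProg n E) (graphProg n F) :=
    h.globalIntEq (propProg_graphProg E) (irrProg_graphProg E) (propProg_graphProg F)
      (irrProg_graphProg F)
  exact ⟨⟨congruent_globalIntEq ∘ iso_congruent, GlobalIntEq.exists_iso_graphProg⟩,
    ⟨iso_congruent ∘ GlobalIntEq.exists_iso_graphProg, congruent_globalIntEq⟩⟩

end McCarthy
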